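/- arXiv:2002.08739 — 5 statements merged into one kernel-verified Lean document; each statement's English description precedes it below -/
import Mathlib

section
/- Consider sequences (n_t) and (e_t) of natural numbers satisfying n_0 ≥ 1, e_0 ≥ 0, and for all t ≥ 0: n_{t+1} = n_t + C(n_t, ⌊n_t/2⌋) and e_{t+1} = e_t + ⌊n_t/2⌋ · C(n_t, ⌊n_t/2⌋) (these are the vertex and edge counts of the iterated half-model). Then the ratio e_t / n_t tends to infinity as t → ∞; that is, the half-model densifies with time. -/
/-- if `n_0 ≥ 1`, `e_0 ≥ 0`, `n_{t+1} = n_t + C(n_t, ⌊n_t/2⌋)` and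
`e_{t+1} = e_t + ⌊n_t/2⌋ · C(n_t, ⌊n_t/2⌋)` (the vertex and edge counts of the
iterated half-model), then `e_t / n_t → ∞`: the half-model densifies. -/
theorem stmt_3 (n e : ℕ → ℕ) (hn0 : 1 ≤ n 0) (he0 : 0 ≤ e 0)
    (hn : ∀ t, n (t + 1) = n t + (n t).choose (n t / 2))
    (he : ∀ t, e (t + 1) = e t + (n t / 2) * (n t).choose (n t / 2)) :
    Filter.Tendsto (fun t => (e t : ℝ) / (n t : ℝ)) Filter.atTop Filter.atTop := by
  have hn1 : ∀ t, 1 ≤ n t := by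
    intro t; induction t with
    | zero => exact hn0
    | succ s ih => rw [hn s]; omega
  have hc : ∀ t, n t ≤ (n t).choose (n t / 2) := by
    intro t
    calc n t = (n t).choose 1 := (Nat.choose_one_right _).symm
    _ ≤ _ := Nat.choose_le_middle 1 (n t)
  have hmono : ∀ t, t + 1 ≤ n t := by
    intro t; induction t with
    | zero => exact hn0
    | succ s ih => have := hc s; rw [hn s]; omega
  have key : ∀ t, 2 ≤ t → t * n t ≤ 8 * e t := by
    intro t ht
    obtain ⟨s, rfl⟩ : ∃ s, t = s + 1 := ⟨t - 1, by omega⟩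
    have hns : 2 ≤ n s := by have := hmono s; omega
    set c := (n s).choose (n s / 2) with hcdef
    have h1 : n s ≤ c := hc s
    have h2 : n s ≤ 4 * (n s / 2) := by omega
    have h3 : s + 1 ≤ n s := hmono s
    rw [hn s, he s]
    calc (s + 1) * (n s + c) ≤ n s * (2 * c) := by nlinarith
    _ ≤ 4 * (n s / 2) * (2 * c) := by
        exact Nat.mul_le_mul_right _ h2
    _ = 8 * (n s / 2 * c) := by ring
    _ ≤ 8 * (e s + n s / 2 * c) := by omega
  have hlim : Filter.Tendsto (fun t : ℕ => (t : ℝ) / 8) Filter.atTop Filter.atTop :=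
    (tendsto_natCast_atTop_atTop).atTop_div_const (by norm_num)
  apply Filter.tendsto_atTop_mono' Filter.atTop _ hlim
  filter_upwards [Filter.eventually_ge_atTop 2] with t ht
  have hnt : (0 : ℝ) < n t := by exact_mod_cast hn1 t
  rw [div_le_div_iff₀ (by norm_num) hnt]
  have hk := key t ht
  have : (t * n t : ℝ) ≤ (8 * e t : ℝ) := by exact_mod_cast hk
  push_cast at this ⊢
  nlinarith [this]
end

section
/- Let G be a finite simple graph with n ≥ 4 vertices and let H = H(G) be the graph obtained from G by one step of the half-model. Then H is connected (regardless of whether G is connected). -/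
open SimpleGraph

/-! Since `⌊n/2⌋ ≥ 2`, any two old vertices lie in a common `⌊n/2⌋`-subset, so they are joined
through the corresponding clone; and every clone has an old neighbour because its set is
nonempty. Hence everything is reachable from any old vertex. -/

/-- The set of "clones": one new vertex for each subset of `V` of size `⌊|V|/2⌋`. -/
abbrev halfClones (V : Type) [Fintype V] [DecidableEq V] : Type :=
  {S : Finset V // S.card = Fintype.card V / 2}

/-- One step of the half-model: old vertices keep their adjacencies; the clone `v_S`
is adjacent exactly to the members of `S`; clones form an independent set. -/
def halfStep {V : Type} [Fintype V] [DecidableEq V] (G : SimpleGraph V) :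
    SimpleGraph (V ⊕ halfClones V) where
  Adj x y :=
    match x, y with
    | Sum.inl u, Sum.inl v => G.Adj u v
    | Sum.inl u, Sum.inr S => u ∈ S.1
    | Sum.inr S, Sum.inl u => u ∈ S.1
    | Sum.inr _, Sum.inr _ => False
  symm := by
    refine ⟨?_⟩
    rintro (u | S) (v | T) h
    · exact G.adj_symm h
    · exact h
    · exact h
    · exact h.elim
  loopless := by
    refine ⟨?_⟩
    rintro (u | S) h
    · exact G.irrefl h
    · exact h.elim

instance halfStep.instDecidableRelAdj {V : Type} [Fintype V] [DecidableEq V]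
    (G : SimpleGraph V) [DecidableRel G.Adj] : DecidableRel (halfStep G).Adj
  | Sum.inl u, Sum.inl v => inferInstanceAs (Decidable (G.Adj u v))
  | Sum.inl u, Sum.inr S => inferInstanceAs (Decidable (u ∈ S.1))
  | Sum.inr S, Sum.inl u => inferInstanceAs (Decidable (u ∈ S.1))
  | Sum.inr _, Sum.inr _ => inferInstanceAs (Decidable False)

section

variable {V : Type} [Fintype V] [DecidableEq V]

lemma exists_halfClones_superset {s : Finset V} (hs : s.card ≤ Fintype.card V / 2) :
    ∃ S : halfClones V, s ⊆ S.1 := by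
  obtain ⟨S, hsS, hS⟩ := Finset.exists_superset_card_eq hs (Nat.div_le_self _ _)
  exact ⟨⟨S, hS⟩, hsS⟩

namespace halfStep

variable (G : SimpleGraph V)

lemma adj_inl_inr {u : V} {S : halfClones V} :
    (halfStep G).Adj (.inl u) (.inr S) ↔ u ∈ S.1 := Iff.rfl

lemma reachable_inl_inl (h : 2 ≤ Fintype.card V / 2) (u v : V) :
    (halfStep G).Reachable (.inl u) (.inl v) := by
  have hcard : ({u, v} : Finset V).card ≤ Fintype.card V / 2 :=
    (Finset.card_le_two).trans h
  obtain ⟨S, huvS⟩ := exists_halfClones_superset hcard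
  have hu : (halfStep G).Adj (.inl u) (.inr S) := (adj_inl_inr G).2 (huvS (by simp))
  have hv : (halfStep G).Adj (.inl v) (.inr S) := (adj_inl_inr G).2 (huvS (by simp))
  exact hu.reachable.trans hv.reachable.symm

lemma exists_adj_inl_inr (h : 0 < Fintype.card V / 2) (S : halfClones V) :
    ∃ u : V, (halfStep G).Adj (.inl u) (.inr S) := by
  obtain ⟨u, hu⟩ := Finset.card_pos.mp (S.2 ▸ h)
  exact ⟨u, (adj_inl_inr G).2 hu⟩

theorem connected (h : 2 ≤ Fintype.card V / 2) : (halfStep G).Connected := by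
  obtain ⟨v₀⟩ : Nonempty V := Fintype.card_pos_iff.mp (by omega)
  refine (connected_iff_exists_forall_reachable _).2 ⟨.inl v₀, ?_⟩
  rintro (u | S)
  · exact reachable_inl_inl G h v₀ u
  · obtain ⟨u, hu⟩ := exists_adj_inl_inr G (by omega) S
    exact (reachable_inl_inl G h v₀ u).trans hu.reachable

end halfStep

end

/-- if `G` has at least `4` vertices, then one step of the half-model
produces a connected graph (regardless of whether `G` is connected). -/
theorem stmt_5 {V : Type} [Fintype V] [DecidableEq V] (G : SimpleGraph V)
    (hn : 4 ≤ Fintype.card V) :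
    (halfStep G).Connected :=
  halfStep.connected G (by omega)
end

section
/- Let G be a finite simple graph with n ≥ 2 vertices and let H = H(G) be the graph obtained from G by one step of the half-model. Then the independence number of H equals C(n, ⌊n/2⌋), the number of new vertices. -/
open SimpleGraph

/-- The independence number of a graph: the maximum cardinality of a set of pairwise
non-adjacent vertices. -/
noncomputable def indepNum {W : Type} (G : SimpleGraph W) : ℕ :=
  sSup {k | ∃ s : Finset W, s.card = k ∧
    (↑s : Set W).Pairwise (fun u v => ¬ G.Adj u v)}

open SimpleGraph

/-!
The clones form an independent set of size `C(n, ⌊n/2⌋)`. Conversely, if an independent set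
contains `a` old vertices, each of its clones `v_S` has `S` disjoint from them, so it has at most
`a + C(n - a, ⌊n/2⌋)` elements; Pascal's rule shows this is at most `C(n, ⌊n/2⌋)`.
-/

lemma indepNum_eq_of_isIndepSet_of_forall_card_le {W : Type} (G : SimpleGraph W) {m : ℕ}
    (s : Finset W) (hs : G.IsIndepSet ↑s) (hcard : s.card = m)
    (hle : ∀ t : Finset W, G.IsIndepSet ↑t → t.card ≤ m) :
    _root_.indepNum G = m := by
  have hmem : m ∈ {k | ∃ s : Finset W, s.card = k ∧ G.IsIndepSet ↑s} := ⟨s, hcard, hs⟩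
  have hbdd : ∀ k ∈ {k | ∃ s : Finset W, s.card = k ∧ G.IsIndepSet ↑s}, k ≤ m := by
    rintro k ⟨t, rfl, ht⟩
    exact hle t ht
  exact le_antisymm (csSup_le ⟨m, hmem⟩ hbdd) (le_csSup ⟨m, hbdd⟩ hmem)

lemma Nat.add_choose_le_choose_add {m k : ℕ} (hk0 : k ≠ 0) (hkm : k ≤ m + 1) (a : ℕ) :
    a + m.choose k ≤ (m + a).choose k := by
  obtain ⟨j, rfl⟩ := Nat.exists_eq_succ_of_ne_zero hk0
  induction a with
  | zero => simp
  | succ a ih =>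
    have hpos : 0 < (m + a).choose j := Nat.choose_pos (by omega)
    rw [← Nat.add_assoc, Nat.choose_succ_succ]
    omega

lemma Nat.add_choose_sub_le_choose {n k a : ℕ} (hk0 : k ≠ 0) (ha : a ≤ n)
    (hn : n ≤ n.choose k) : a + (n - a).choose k ≤ n.choose k := by
  rcases le_or_gt k (n - a + 1) with hk | hk
  · simpa [Nat.sub_add_cancel ha] using Nat.add_choose_le_choose_add hk0 hk a
  · rw [Nat.choose_eq_zero_of_lt (by omega)]
    omega

section HalfStep

variable {V : Type} [Fintype V] [DecidableEq V] (G : SimpleGraph V)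

lemma halfStep_isIndepSet_clones :
    (halfStep G).IsIndepSet
      ↑(Finset.univ.map Function.Embedding.inr : Finset (V ⊕ halfClones V)) := by
  simp only [Finset.coe_map, Finset.coe_univ, Set.image_univ, Function.Embedding.inr_apply]
  rintro _ ⟨S, rfl⟩ _ ⟨T, rfl⟩ _
  exact id

lemma card_halfClones :
    Fintype.card (halfClones V) = (Fintype.card V).choose (Fintype.card V / 2) :=
  Fintype.card_finset_len _

lemma card_toRight_le_of_isIndepSet {s : Finset (V ⊕ halfClones V)}
    (hs : (halfStep G).IsIndepSet ↑s) :
    s.toRight.card ≤ (Fintype.card V - s.toLeft.card).choose (Fintype.card V / 2) := by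
  have hmaps : Set.MapsTo (fun S : halfClones V => S.1) ↑s.toRight
      ↑(s.toLeftᶜ.powersetCard (Fintype.card V / 2)) := by
    intro S hS
    refine Finset.mem_powersetCard.mpr ⟨fun u hu => Finset.mem_compl.mpr fun huA => ?_, S.2⟩
    exact hs (Finset.mem_toLeft.mp huA) (Finset.mem_toRight.mp hS) (by simp) hu
  have := Finset.card_le_card_of_injOn _ hmaps Subtype.val_injective.injOn
  rwa [Finset.card_powersetCard, Finset.card_compl] at this

lemma card_le_of_isIndepSet_halfStep (hn : 2 ≤ Fintype.card V) {s : Finset (V ⊕ halfClones V)}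
    (hs : (halfStep G).IsIndepSet ↑s) :
    s.card ≤ (Fintype.card V).choose (Fintype.card V / 2) := by
  have hmiddle : Fintype.card V ≤ (Fintype.card V).choose (Fintype.card V / 2) := by
    simpa using Nat.choose_le_middle 1 (Fintype.card V)
  rw [← Finset.card_toLeft_add_card_toRight]
  calc s.toLeft.card + s.toRight.card
      ≤ s.toLeft.card + (Fintype.card V - s.toLeft.card).choose (Fintype.card V / 2) :=
        Nat.add_le_add_left (card_toRight_le_of_isIndepSet G hs) _
    _ ≤ (Fintype.card V).choose (Fintype.card V / 2) :=
        Nat.add_choose_sub_le_choose (by omega) (Finset.card_le_univ _) hmiddle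

end HalfStep

/-- if `G` has `n ≥ 2` vertices, then the independence number of
`H = H(G)` equals `C(n, ⌊n/2⌋)`, the number of new vertices. -/
theorem stmt_11 {V : Type} [Fintype V] [DecidableEq V] (G : SimpleGraph V)
    (hn : 2 ≤ Fintype.card V) :
    _root_.indepNum (halfStep G) = (Fintype.card V).choose (Fintype.card V / 2) := by
  refine indepNum_eq_of_isIndepSet_of_forall_card_le _ _ (halfStep_isIndepSet_clones G) ?_
    fun t ht => card_le_of_isIndepSet_halfStep G hn ht
  rw [Finset.card_map, Finset.card_univ, card_halfClones]
end

section
/- Let G be a finite simple graph with n vertices such that the chromatic number satisfies χ(G) ≤ ⌊n/2⌋, and let H = H(G) be the graph obtained from G by one step of the half-model. Then χ(H) = χ(G) + 1. -/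
open SimpleGraph

/-!
The clones form an independent set, so giving all of them one fresh colour extends any
`k`-colouring of `G` to `H(G)`. Conversely, restrict a `χ(G)`-colouring of `H(G)` to `G`: it
uses every colour, so some `χ(G) ≤ ⌊n/2⌋` vertices carry all colours, and the clone of a
`⌊n/2⌋`-set containing them has no colour left.
-/

theorem Function.Surjective.exists_card_eq_surjOn {V α : Type*} [Fintype V] [Fintype α]
    {f : V → α} (hf : Function.Surjective f) {m : ℕ} (hαm : Fintype.card α ≤ m)
    (hmV : m ≤ Fintype.card V) :
    ∃ S : Finset V, S.card = m ∧ Set.SurjOn f S Set.univ := by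
  classical
  obtain ⟨g, hg⟩ := hf.hasRightInverse
  have hcard : (Finset.univ.image g).card = Fintype.card α := by
    rw [Finset.card_image_of_injective _ hg.injective, Finset.card_univ]
  obtain ⟨S, hgS, -, hS⟩ := Finset.exists_subsuperset_card_eq
    (Finset.subset_univ (Finset.univ.image g)) (hcard ▸ hαm) (by simpa using hmV)
  exact ⟨S, hS, fun a _ => ⟨g a, hgS (Finset.mem_image_of_mem g (Finset.mem_univ a)), hg a⟩⟩

namespace halfStep

variable {V : Type} [Fintype V] [DecidableEq V] {G : SimpleGraph V}

def inlHom (G : SimpleGraph V) : G →g halfStep G where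
  toFun := Sum.inl
  map_rel' h := h

theorem colorable_succ {k : ℕ} (hG : G.Colorable k) : (halfStep G).Colorable (k + 1) := by
  obtain ⟨c⟩ := hG
  refine ⟨Coloring.mk (Sum.elim (fun v => (c v).castSucc) fun _ => Fin.last k) ?_⟩
  rintro (u | S) (v | T) hadj
  · exact fun he => c.valid hadj (Fin.castSucc_injective _ he)
  · exact (Fin.castSucc_lt_last (c u)).ne
  · exact (Fin.castSucc_lt_last (c v)).ne'
  · exact hadj.elim

theorem not_colorable_of_le_chromaticNumber {k : ℕ} (hk : (k : ℕ∞) ≤ G.chromaticNumber)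
    (hkn : k ≤ Fintype.card V / 2) : ¬ (halfStep G).Colorable k := by
  rintro ⟨C⟩
  have hsurj : Function.Surjective (C.comap (inlHom G)) :=
    le_chromaticNumber_iff_forall_surjective.mp hk _
  obtain ⟨S, hS, hSsurj⟩ := hsurj.exists_card_eq_surjOn (by simpa using hkn)
    (Nat.div_le_self _ 2)
  obtain ⟨v, hvS, hv⟩ := hSsurj (Set.mem_univ (C (Sum.inr ⟨S, hS⟩)))
  exact C.valid (show (halfStep G).Adj (Sum.inl v) (Sum.inr ⟨S, hS⟩) from hvS) hv

theorem chromaticNumber_eq {k : ℕ} (hk : G.chromaticNumber = k)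
    (hkn : k ≤ Fintype.card V / 2) : (halfStep G).chromaticNumber = k + 1 :=
  chromaticNumber_eq_iff_colorable_not_colorable.mpr
    ⟨colorable_succ (chromaticNumber_le_iff_colorable.mp hk.le),
      not_colorable_of_le_chromaticNumber hk.ge hkn⟩

end halfStep

/-- if `χ(G) ≤ ⌊n/2⌋`, then `χ(H(G)) = χ(G) + 1`. -/
theorem stmt_15 {V : Type} [Fintype V] [DecidableEq V] (G : SimpleGraph V)
    (h : G.chromaticNumber ≤ (Fintype.card V / 2 : ℕ)) :
    (halfStep G).chromaticNumber = G.chromaticNumber + 1 := by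
  obtain ⟨k, hk⟩ := ENat.ne_top_iff_exists.mp (ne_top_of_le_ne_top (ENat.natCast_ne_top _) h)
  rw [← hk] at h ⊢
  exact halfStep.chromaticNumber_eq hk.symm (by exact_mod_cast h)
end

section
/- Let G be a finite simple graph with n ≥ 2 vertices and let H = H(G) be the graph obtained from G by one step of the half-model. Then the domination number of H equals ⌈n/2⌉ + 1. -/
open SimpleGraph

/-- The domination number of a graph: the minimum cardinality of a set `D` of vertices
such that every vertex not in `D` has a neighbor in `D`. -/
noncomputable def dominationNum {W : Type} (G : SimpleGraph W) : ℕ :=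
  sInf {k | ∃ s : Finset W, s.card = k ∧ ∀ v ∉ s, ∃ u ∈ s, G.Adj u v}

/-!
A clone `v_S` can only be dominated by itself or by an old vertex of `S`. So if `A` is the set
of old vertices of a dominating set `D`, every `⌊n/2⌋`-subset of `V \ A` is a clone in `D`; as
`C(m, k) ≥ m - k + 1` for `1 ≤ k ≤ m`, this gives `|D| ≥ |A| + (n - |A| - ⌊n/2⌋ + 1) = ⌈n/2⌉ + 1`
(and if `|V \ A| < ⌊n/2⌋`, then `|A|` alone is large enough). Conversely, for any
`⌊n/2⌋`-set `T`, the clone `v_T` together with `V \ T` dominates: the old vertices of `T` see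
`v_T`, and any other clone `v_S` contains an old vertex outside `T`.
-/

theorem Nat.succ_sub_le_choose {m k : ℕ} (hk : 0 < k) (hkm : k ≤ m) :
    m + 1 - k ≤ m.choose k := by
  obtain ⟨j, rfl⟩ : ∃ j, k = j + 1 := ⟨k - 1, by omega⟩
  induction m, hkm using Nat.le_induction with
  | base => simp
  | succ m hjm ih =>
    have : 0 < m.choose j := Nat.choose_pos (by omega)
    rw [Nat.choose_succ_succ']
    omega

def IsDominatingSet {W : Type} (G : SimpleGraph W) (s : Finset W) : Prop :=
  ∀ v ∉ s, ∃ u ∈ s, G.Adj u v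

theorem dominationNum_eq {W : Type} {G : SimpleGraph W} {s : Finset W} {k : ℕ}
    (hs : IsDominatingSet G s) (hcard : s.card = k)
    (hmin : ∀ t, IsDominatingSet G t → k ≤ t.card) : dominationNum G = k :=
  le_antisymm (Nat.sInf_le ⟨s, hcard, hs⟩)
    (le_csInf ⟨k, s, hcard, hs⟩ (by rintro _ ⟨t, rfl, ht⟩; exact hmin t ht))

section HalfStep

variable {V : Type} [Fintype V] [DecidableEq V] (G : SimpleGraph V)

def cloneWithComplement (T : halfClones V) : Finset (V ⊕ halfClones V) :=
  insert (.inr T) (T.1ᶜ.map .inl)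

theorem inl_mem_cloneWithComplement {T : halfClones V} {x : V} :
    Sum.inl x ∈ cloneWithComplement T ↔ x ∉ T.1 := by
  simp [cloneWithComplement]

theorem isDominatingSet_cloneWithComplement (T : halfClones V) :
    IsDominatingSet (halfStep G) (cloneWithComplement T) := by
  rintro (x | S) hx
  · exact ⟨.inr T, Finset.mem_insert_self _ _, not_not.1 (mt inl_mem_cloneWithComplement.2 hx)⟩
  · have hST : S ≠ T := by
      rintro rfl
      exact hx (Finset.mem_insert_self _ _)
    have hnsub : ¬ S.1 ⊆ T.1 := fun hsub =>
      hST (Subtype.ext (Finset.eq_of_subset_of_card_le hsub (by rw [S.2, T.2])))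
    obtain ⟨w, hwS, hwT⟩ := Finset.not_subset.1 hnsub
    exact ⟨.inl w, inl_mem_cloneWithComplement.2 hwT, hwS⟩

theorem card_cloneWithComplement (T : halfClones V) :
    (cloneWithComplement T).card = (Fintype.card V + 1) / 2 + 1 := by
  rw [cloneWithComplement, Finset.card_insert_of_notMem (by simp), Finset.card_map,
    Finset.card_compl, T.2]
  omega

variable {G}

theorem inr_mem_of_isDominatingSet_halfStep {D : Finset (V ⊕ halfClones V)}
    (hD : IsDominatingSet (halfStep G) D) {S : halfClones V} (hS : S.1 ⊆ D.toLeftᶜ) :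
    Sum.inr S ∈ D := by
  by_contra hSD
  obtain ⟨u | T, hu, hadj⟩ := hD _ hSD
  · exact Finset.mem_compl.1 (hS (hadj : u ∈ S.1)) (Finset.mem_toLeft.2 hu)
  · exact hadj

theorem powersetCard_compl_toLeft_subset {D : Finset (V ⊕ halfClones V)}
    (hD : IsDominatingSet (halfStep G) D) :
    D.toLeftᶜ.powersetCard (Fintype.card V / 2) ⊆ D.toRight.image Subtype.val := by
  intro S hS
  rw [Finset.mem_powersetCard] at hS
  exact Finset.mem_image.2 ⟨⟨S, hS.2⟩,
    Finset.mem_toRight.2 (inr_mem_of_isDominatingSet_halfStep hD hS.1), rfl⟩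

theorem le_card_of_isDominatingSet_halfStep (hn : 2 ≤ Fintype.card V)
    {D : Finset (V ⊕ halfClones V)} (hD : IsDominatingSet (halfStep G) D) :
    (Fintype.card V + 1) / 2 + 1 ≤ D.card := by
  have hsplit := D.card_toLeft_add_card_toRight
  have hcompl := D.toLeft.card_compl
  by_cases hroom : Fintype.card V / 2 ≤ D.toLeftᶜ.card
  · have hclones : D.toLeftᶜ.card.choose (Fintype.card V / 2) ≤ D.toRight.card := by
      rw [← Finset.card_powersetCard]
      exact (Finset.card_le_card (powersetCard_compl_toLeft_subset hD)).trans
        Finset.card_image_le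
    have hchoose := Nat.succ_sub_le_choose (m := D.toLeftᶜ.card) (by omega) hroom
    omega
  · omega

end HalfStep

/-- if `G` has `n ≥ 2` vertices, then the domination number of
`H = H(G)` equals `⌈n/2⌉ + 1`. -/
theorem stmt_18 {V : Type} [Fintype V] [DecidableEq V] (G : SimpleGraph V)
    (hn : 2 ≤ Fintype.card V) :
    dominationNum (halfStep G) = (Fintype.card V + 1) / 2 + 1 := by
  obtain ⟨T, -, hT⟩ :=
    (Finset.univ : Finset V).exists_subset_card_eq (n := Fintype.card V / 2) (by simp; omega)
  exact dominationNum_eq (isDominatingSet_cloneWithComplement G ⟨T, hT⟩)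
    (card_cloneWithComplement ⟨T, hT⟩) fun _ hD => le_card_of_isDominatingSet_halfStep hn hD
end
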